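/- arXiv:2301.05162 — 2 statements merged into one kernel-verified Lean document; each statement's English description precedes it below -/
import Mathlib

section
/- The functor 𝔉 : Freyd → Subset-Freyd is left adjoint to the functor 𝔘 : Subset-Freyd → Freyd. Moreover 𝔘𝔉 = Id_Freyd, the unit of the adjunction may be taken to be the identity, the counit component at a Subset-Freyd category C has first component Id_M and second component the identity function on each C(a,b) (viewed as a Subset morphism 𝔉𝔘(C)(a,b) → C(a,b)), and the adjunction is idempotent. -/
set_option linter.unusedVariables false
open CategoryTheory CategoryTheory.Limits MonoidalCategory

universe w v u v₁ u₁ v₂ u₂ v₃ u₃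

/-- The data of a monoidal structure on a category (tensor, unit, structural morphisms). -/
structure MonStrData (V : Type u) [Category.{v} V] where
  t : V → V → V
  tHom : ∀ {X₁ Y₁ X₂ Y₂ : V}, (X₁ ⟶ Y₁) → (X₂ ⟶ Y₂) → (t X₁ X₂ ⟶ t Y₁ Y₂)
  unit : V
  aHom : ∀ X Y Z : V, t (t X Y) Z ⟶ t X (t Y Z)
  aInv : ∀ X Y Z : V, t X (t Y Z) ⟶ t (t X Y) Z
  lHom : ∀ X : V, t unit X ⟶ X
  lInv : ∀ X : V, X ⟶ t unit X
  rHom : ∀ X : V, t X unit ⟶ X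
  rInv : ∀ X : V, X ⟶ t X unit

/-- The data of a monoidal structure is an actual monoidal structure. -/
structure IsMonStr {V : Type u} [Category.{v} V] (m : MonStrData V) : Prop where
  tHom_id : ∀ X Y : V, m.tHom (𝟙 X) (𝟙 Y) = 𝟙 (m.t X Y)
  tHom_comp : ∀ {X₁ Y₁ Z₁ X₂ Y₂ Z₂ : V} (f₁ : X₁ ⟶ Y₁) (g₁ : Y₁ ⟶ Z₁) (f₂ : X₂ ⟶ Y₂)
    (g₂ : Y₂ ⟶ Z₂), m.tHom (f₁ ≫ g₁) (f₂ ≫ g₂) = m.tHom f₁ f₂ ≫ m.tHom g₁ g₂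
  a_hom_inv : ∀ X Y Z : V, m.aHom X Y Z ≫ m.aInv X Y Z = 𝟙 _
  a_inv_hom : ∀ X Y Z : V, m.aInv X Y Z ≫ m.aHom X Y Z = 𝟙 _
  a_nat : ∀ {X₁ Y₁ X₂ Y₂ X₃ Y₃ : V} (f₁ : X₁ ⟶ Y₁) (f₂ : X₂ ⟶ Y₂) (f₃ : X₃ ⟶ Y₃),
    m.tHom (m.tHom f₁ f₂) f₃ ≫ m.aHom Y₁ Y₂ Y₃ = m.aHom X₁ X₂ X₃ ≫ m.tHom f₁ (m.tHom f₂ f₃)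
  l_hom_inv : ∀ X : V, m.lHom X ≫ m.lInv X = 𝟙 _
  l_inv_hom : ∀ X : V, m.lInv X ≫ m.lHom X = 𝟙 _
  l_nat : ∀ {X Y : V} (f : X ⟶ Y), m.tHom (𝟙 m.unit) f ≫ m.lHom Y = m.lHom X ≫ f
  r_hom_inv : ∀ X : V, m.rHom X ≫ m.rInv X = 𝟙 _
  r_inv_hom : ∀ X : V, m.rInv X ≫ m.rHom X = 𝟙 _
  r_nat : ∀ {X Y : V} (f : X ⟶ Y), m.tHom f (𝟙 m.unit) ≫ m.rHom Y = m.rHom X ≫ f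
  triangle : ∀ X Y : V,
    m.aHom X m.unit Y ≫ m.tHom (𝟙 X) (m.lHom Y) = m.tHom (m.rHom X) (𝟙 Y)
  pentagon : ∀ W X Y Z : V,
    m.tHom (m.aHom W X Y) (𝟙 Z) ≫ m.aHom W (m.t X Y) Z ≫ m.tHom (𝟙 W) (m.aHom X Y Z)
      = m.aHom (m.t W X) Y Z ≫ m.aHom W X (m.t Y Z)

/-- The data of a duoidal category structure: a "parallel" monoidal structure `p = (∗, J)`,
a "sequential" monoidal structure `s = (∘, I)`, the interchange `ζ`, and `Δ`, `∇`, `ε`. -/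
structure DuoidalData (V : Type u) [Category.{v} V] where
  p : MonStrData V
  s : MonStrData V
  zeta : ∀ A B C D : V, p.t (s.t A B) (s.t C D) ⟶ s.t (p.t A C) (p.t B D)
  delta : p.unit ⟶ s.t p.unit p.unit
  nabla : p.t s.unit s.unit ⟶ s.unit
  eps : p.unit ⟶ s.unit

/-- The data of a duoidal structure is an actual duoidal category structure. -/
structure IsDuoidal {V : Type u} [Category.{v} V] (d : DuoidalData V) : Prop where
  p_mon : IsMonStr d.p
  s_mon : IsMonStr d.s
  zeta_nat : ∀ {A A' B B' C C' D D' : V} (f : A ⟶ A') (g : B ⟶ B') (h : C ⟶ C') (k : D ⟶ D'),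
    d.p.tHom (d.s.tHom f g) (d.s.tHom h k) ≫ d.zeta A' B' C' D'
      = d.zeta A B C D ≫ d.s.tHom (d.p.tHom f h) (d.p.tHom g k)
  -- (I, ∇, ε) is a monoid in (V, ∗, J)
  nabla_assoc : d.p.tHom d.nabla (𝟙 d.s.unit) ≫ d.nabla
      = d.p.aHom d.s.unit d.s.unit d.s.unit ≫ d.p.tHom (𝟙 d.s.unit) d.nabla ≫ d.nabla
  nabla_eps_left : d.p.tHom d.eps (𝟙 d.s.unit) ≫ d.nabla = d.p.lHom d.s.unit
  nabla_eps_right : d.p.tHom (𝟙 d.s.unit) d.eps ≫ d.nabla = d.p.rHom d.s.unit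
  -- (J, Δ, ε) is a comonoid in (V, ∘, I)
  delta_coassoc : d.delta ≫ d.s.tHom d.delta (𝟙 d.p.unit) ≫ d.s.aHom d.p.unit d.p.unit d.p.unit
      = d.delta ≫ d.s.tHom (𝟙 d.p.unit) d.delta
  delta_eps_left : d.delta ≫ d.s.tHom d.eps (𝟙 d.p.unit) ≫ d.s.lHom d.p.unit = 𝟙 d.p.unit
  delta_eps_right : d.delta ≫ d.s.tHom (𝟙 d.p.unit) d.eps ≫ d.s.rHom d.p.unit = 𝟙 d.p.unit
  -- compatibility of ζ with the associator of ∗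
  hexagon_p : ∀ A B C D E F : V,
    d.p.tHom (d.zeta A B C D) (𝟙 (d.s.t E F)) ≫ d.zeta (d.p.t A C) (d.p.t B D) E F
        ≫ d.s.tHom (d.p.aHom A C E) (d.p.aHom B D F)
      = d.p.aHom (d.s.t A B) (d.s.t C D) (d.s.t E F) ≫ d.p.tHom (𝟙 (d.s.t A B)) (d.zeta C D E F)
        ≫ d.zeta A B (d.p.t C E) (d.p.t D F)
  -- compatibility of ζ with the associator of ∘
  hexagon_s : ∀ A B C D E F : V,
    d.zeta (d.s.t A B) C (d.s.t D E) F ≫ d.s.tHom (d.zeta A B D E) (𝟙 (d.p.t C F))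
        ≫ d.s.aHom (d.p.t A D) (d.p.t B E) (d.p.t C F)
      = d.p.tHom (d.s.aHom A B C) (d.s.aHom D E F) ≫ d.zeta A (d.s.t B C) D (d.s.t E F)
        ≫ d.s.tHom (𝟙 (d.p.t A D)) (d.zeta B C E F)
  -- compatibility of ζ with the unitors of ∗ via Δ
  unit_p_left : ∀ A B : V,
    d.p.tHom d.delta (𝟙 (d.s.t A B)) ≫ d.zeta d.p.unit d.p.unit A B
        ≫ d.s.tHom (d.p.lHom A) (d.p.lHom B)
      = d.p.lHom (d.s.t A B)
  unit_p_right : ∀ A B : V,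
    d.p.tHom (𝟙 (d.s.t A B)) d.delta ≫ d.zeta A B d.p.unit d.p.unit
        ≫ d.s.tHom (d.p.rHom A) (d.p.rHom B)
      = d.p.rHom (d.s.t A B)
  -- compatibility of ζ with the unitors of ∘ via ∇
  unit_s_left : ∀ A B : V,
    d.zeta d.s.unit A d.s.unit B ≫ d.s.tHom d.nabla (𝟙 (d.p.t A B)) ≫ d.s.lHom (d.p.t A B)
      = d.p.tHom (d.s.lHom A) (d.s.lHom B)
  unit_s_right : ∀ A B : V,
    d.zeta A d.s.unit B d.s.unit ≫ d.s.tHom (𝟙 (d.p.t A B)) d.nabla ≫ d.s.rHom (d.p.t A B)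
      = d.p.tHom (d.s.rHom A) (d.s.rHom B)

/-- The data of a `V`-Freyd category over a monoidal category `M`,
relative to duoidal data `d` on `V`. -/
structure VFreydData {V : Type u₁} [Category.{v₁} V] (d : DuoidalData V)
    (M : Type u₂) [Category.{v₂} M] [MonoidalCategory M] where
  obj : M → M → V
  map : ∀ {a a' b b' : M}, (a' ⟶ a) → (b ⟶ b') → (obj a b ⟶ obj a' b')
  idt : ∀ a : M, d.s.unit ⟶ obj a a
  seq : ∀ a b c : M, d.s.t (obj a b) (obj b c) ⟶ obj a c
  zero : d.p.unit ⟶ obj (𝟙_ M) (𝟙_ M)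
  par : ∀ a₁ b₁ a₂ b₂ : M, d.p.t (obj a₁ b₁) (obj a₂ b₂) ⟶ obj (a₁ ⊗ a₂) (b₁ ⊗ b₂)

/-- The data of a `V`-Freyd category is an actual `V`-Freyd category:
bifunctoriality, (extra)naturality of the structure maps, and the eight axioms. -/
structure IsVFreyd {V : Type u₁} [Category.{v₁} V] {d : DuoidalData V}
    {M : Type u₂} [Category.{v₂} M] [MonoidalCategory M] (C : VFreydData d M) : Prop where
  map_id : ∀ a b : M, C.map (𝟙 a) (𝟙 b) = 𝟙 (C.obj a b)
  map_comp : ∀ {a a' a'' b b' b'' : M} (f : a' ⟶ a) (f' : a'' ⟶ a') (g : b ⟶ b') (g' : b' ⟶ b''),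
    C.map (f' ≫ f) (g ≫ g') = C.map f g ≫ C.map f' g'
  idt_extra : ∀ {a b : M} (f : a ⟶ b),
    C.idt a ≫ C.map (𝟙 a) f = C.idt b ≫ C.map f (𝟙 b)
  seq_nat : ∀ {a a' c c' : M} (f : a' ⟶ a) (g : c ⟶ c') (b : M),
    d.s.tHom (C.map f (𝟙 b)) (C.map (𝟙 b) g) ≫ C.seq a' b c' = C.seq a b c ≫ C.map f g
  seq_extra : ∀ {b b' : M} (f : b ⟶ b') (a c : M),
    d.s.tHom (C.map (𝟙 a) f) (𝟙 (C.obj b' c)) ≫ C.seq a b' c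
      = d.s.tHom (𝟙 (C.obj a b)) (C.map f (𝟙 c)) ≫ C.seq a b c
  par_nat : ∀ {a₁ a₁' b₁ b₁' a₂ a₂' b₂ b₂' : M}
    (f₁ : a₁' ⟶ a₁) (g₁ : b₁ ⟶ b₁') (f₂ : a₂' ⟶ a₂) (g₂ : b₂ ⟶ b₂'),
    d.p.tHom (C.map f₁ g₁) (C.map f₂ g₂) ≫ C.par a₁' b₁' a₂' b₂'
      = C.par a₁ b₁ a₂ b₂ ≫ C.map (f₁ ⊗ₘ f₂) (g₁ ⊗ₘ g₂)
  -- (i) idt is the identity for seq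
  idt_seq : ∀ a b : M,
    d.s.tHom (C.idt a) (𝟙 (C.obj a b)) ≫ C.seq a a b = d.s.lHom (C.obj a b)
  seq_idt : ∀ a b : M,
    d.s.tHom (𝟙 (C.obj a b)) (C.idt b) ≫ C.seq a b b = d.s.rHom (C.obj a b)
  -- (ii) seq is associative
  seq_assoc : ∀ a b c e : M,
    d.s.tHom (C.seq a b c) (𝟙 (C.obj c e)) ≫ C.seq a c e
      = d.s.aHom (C.obj a b) (C.obj b c) (C.obj c e)
          ≫ d.s.tHom (𝟙 (C.obj a b)) (C.seq b c e) ≫ C.seq a b e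
  -- (iii) zero is the identity for par
  zero_par : ∀ a b : M,
    d.p.tHom C.zero (𝟙 (C.obj a b)) ≫ C.par (𝟙_ M) (𝟙_ M) a b
        ≫ C.map (λ_ a).inv (λ_ b).hom
      = d.p.lHom (C.obj a b)
  par_zero : ∀ a b : M,
    d.p.tHom (𝟙 (C.obj a b)) C.zero ≫ C.par a b (𝟙_ M) (𝟙_ M)
        ≫ C.map (ρ_ a).inv (ρ_ b).hom
      = d.p.rHom (C.obj a b)
  -- (iv) par is associative
  par_assoc : ∀ a₁ b₁ a₂ b₂ a₃ b₃ : M,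
    d.p.tHom (C.par a₁ b₁ a₂ b₂) (𝟙 (C.obj a₃ b₃)) ≫ C.par (a₁ ⊗ a₂) (b₁ ⊗ b₂) a₃ b₃
        ≫ C.map (α_ a₁ a₂ a₃).inv (α_ b₁ b₂ b₃).hom
      = d.p.aHom (C.obj a₁ b₁) (C.obj a₂ b₂) (C.obj a₃ b₃)
          ≫ d.p.tHom (𝟙 (C.obj a₁ b₁)) (C.par a₂ b₂ a₃ b₃) ≫ C.par a₁ b₁ (a₂ ⊗ a₃) (b₂ ⊗ b₃)
  -- (v) idt respects zero
  idt_zero : d.eps ≫ C.idt (𝟙_ M) = C.zero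
  -- (vi) idt respects par
  idt_par : ∀ a b : M,
    d.nabla ≫ C.idt (a ⊗ b) = d.p.tHom (C.idt a) (C.idt b) ≫ C.par a a b b
  -- (vii) seq respects zero
  seq_zero : d.delta ≫ d.s.tHom C.zero C.zero ≫ C.seq (𝟙_ M) (𝟙_ M) (𝟙_ M) = C.zero
  -- (viii) seq respects par (exchange)
  exchange : ∀ a₁ b₁ c₁ a₂ b₂ c₂ : M,
    d.zeta (C.obj a₁ b₁) (C.obj b₁ c₁) (C.obj a₂ b₂) (C.obj b₂ c₂)
        ≫ d.s.tHom (C.par a₁ b₁ a₂ b₂) (C.par b₁ c₁ b₂ c₂)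
        ≫ C.seq (a₁ ⊗ a₂) (b₁ ⊗ b₂) (c₁ ⊗ c₂)
      = d.p.tHom (C.seq a₁ b₁ c₁) (C.seq a₂ b₂ c₂) ≫ C.par a₁ c₁ a₂ c₂

/-- The data of a strong monoidal functor. -/
structure StrongMonData (M : Type u₂) (M' : Type u₃) [Category.{v₂} M] [MonoidalCategory M]
    [Category.{v₃} M'] [MonoidalCategory M'] where
  T : M ⥤ M'
  εm : 𝟙_ M' ≅ T.obj (𝟙_ M)
  μm : ∀ a b : M, T.obj a ⊗ T.obj b ≅ T.obj (a ⊗ b)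

/-- The data of a strong monoidal functor is an actual strong monoidal functor. -/
structure IsStrongMon {M : Type u₂} {M' : Type u₃} [Category.{v₂} M] [MonoidalCategory M]
    [Category.{v₃} M'] [MonoidalCategory M'] (F : StrongMonData M M') : Prop where
  μ_nat : ∀ {a a' b b' : M} (f : a ⟶ a') (g : b ⟶ b'),
    (F.T.map f ⊗ₘ F.T.map g) ≫ (F.μm a' b').hom = (F.μm a b).hom ≫ F.T.map (f ⊗ₘ g)
  assoc : ∀ a b c : M,
    ((F.μm a b).hom ▷ F.T.obj c) ≫ (F.μm (a ⊗ b) c).hom ≫ F.T.map (α_ a b c).hom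
      = (α_ (F.T.obj a) (F.T.obj b) (F.T.obj c)).hom ≫ (F.T.obj a ◁ (F.μm b c).hom)
          ≫ (F.μm a (b ⊗ c)).hom
  left_unit : ∀ a : M,
    (F.εm.hom ▷ F.T.obj a) ≫ (F.μm (𝟙_ M) a).hom ≫ F.T.map (λ_ a).hom = (λ_ (F.T.obj a)).hom
  right_unit : ∀ a : M,
    (F.T.obj a ◁ F.εm.hom) ≫ (F.μm a (𝟙_ M)).hom ≫ F.T.map (ρ_ a).hom = (ρ_ (F.T.obj a)).hom

/-- A morphism of `V`-Freyd categories. -/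
structure VFreydHom {V : Type u₁} [Category.{v₁} V] {d : DuoidalData V}
    {M : Type u₂} [Category.{v₂} M] [MonoidalCategory M]
    {M' : Type u₃} [Category.{v₃} M'] [MonoidalCategory M']
    (C : VFreydData d M) (C' : VFreydData d M') where
  F₀ : StrongMonData M M'
  strong : IsStrongMon F₀
  app : ∀ a b : M, C.obj a b ⟶ C'.obj (F₀.T.obj a) (F₀.T.obj b)
  naturality : ∀ {a a' b b' : M} (f : a' ⟶ a) (g : b ⟶ b'),
    C.map f g ≫ app a' b' = app a b ≫ C'.map (F₀.T.map f) (F₀.T.map g)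
  hidt : ∀ a : M, C.idt a ≫ app a a = C'.idt (F₀.T.obj a)
  hseq : ∀ a b c : M,
    C.seq a b c ≫ app a c
      = d.s.tHom (app a b) (app b c) ≫ C'.seq (F₀.T.obj a) (F₀.T.obj b) (F₀.T.obj c)
  hpar : ∀ a₁ b₁ a₂ b₂ : M,
    d.p.tHom (app a₁ b₁) (app a₂ b₂)
        ≫ C'.par (F₀.T.obj a₁) (F₀.T.obj b₁) (F₀.T.obj a₂) (F₀.T.obj b₂)
        ≫ C'.map (𝟙 (F₀.T.obj a₁ ⊗ F₀.T.obj a₂)) (F₀.μm b₁ b₂).hom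
      = C.par a₁ b₁ a₂ b₂ ≫ app (a₁ ⊗ a₂) (b₁ ⊗ b₂) ≫ C'.map (F₀.μm a₁ a₂).hom
          (𝟙 (F₀.T.obj (b₁ ⊗ b₂)))

/-- An object of the category `Subset`: a set with a distinguished subset. -/
structure SubObj : Type (u + 1) where
  carrier : Type u
  dist : Set carrier

/-- A morphism of `Subset`: a function preserving the distinguished subsets. -/
@[ext]
structure SubHom (X Y : SubObj.{u}) where
  toFun : X.carrier → Y.carrier
  maps : ∀ a ∈ X.dist, toFun a ∈ Y.dist

instance : Category SubObj.{u} where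
  Hom := SubHom
  id X := ⟨id, fun a ha => ha⟩
  comp f g := ⟨fun a => g.toFun (f.toFun a), fun a ha => g.maps _ (f.maps a ha)⟩

/-- The cartesian product monoidal structure on `Subset`. -/
def cartSub : MonStrData SubObj.{u} where
  t X Y := ⟨X.carrier × Y.carrier, {p | p.1 ∈ X.dist ∧ p.2 ∈ Y.dist}⟩
  tHom f g := ⟨fun p => (f.toFun p.1, g.toFun p.2),
    fun p hp => ⟨f.maps _ hp.1, g.maps _ hp.2⟩⟩
  unit := ⟨PUnit, Set.univ⟩
  aHom X Y Z := ⟨fun p => (p.1.1, (p.1.2, p.2)), fun p hp => ⟨hp.1.1, hp.1.2, hp.2⟩⟩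
  aInv X Y Z := ⟨fun p => ((p.1, p.2.1), p.2.2), fun p hp => ⟨⟨hp.1, hp.2.1⟩, hp.2.2⟩⟩
  lHom X := ⟨fun p => p.2, fun p hp => hp.2⟩
  lInv X := ⟨fun x => (PUnit.unit, x), fun x hx => ⟨trivial, hx⟩⟩
  rHom X := ⟨fun p => p.1, fun p hp => hp.1⟩
  rInv X := ⟨fun x => (x, PUnit.unit), fun x hx => ⟨hx, trivial⟩⟩

/-- The disjunctive product monoidal structure on `Subset`:
`(X, A) ⊗ (Y, B) = (X × Y, (A × Y) ∪ (X × B))`. -/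
def disjSub : MonStrData SubObj.{u} where
  t X Y := ⟨{p : X.carrier × Y.carrier // p.1 ∈ X.dist ∨ p.2 ∈ Y.dist},
    {p | p.val.1 ∈ X.dist ∧ p.val.2 ∈ Y.dist}⟩
  tHom f g := ⟨fun p => ⟨(f.toFun p.val.1, g.toFun p.val.2),
      p.property.imp (f.maps _) (g.maps _)⟩,
    fun p hp => ⟨f.maps _ hp.1, g.maps _ hp.2⟩⟩
  unit := ⟨PUnit, Set.univ⟩
  aHom X Y Z := ⟨fun p => ⟨(p.val.1.val.1, ⟨(p.val.1.val.2, p.val.2),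
      p.property.elim (fun h => Or.inl h.2) Or.inr⟩),
      p.property.elim (fun h => Or.inl h.1)
        (fun hz => p.val.1.property.imp id (fun hy => ⟨hy, hz⟩))⟩,
    fun p hp => ⟨hp.1.1, hp.1.2, hp.2⟩⟩
  aInv X Y Z := ⟨fun p => ⟨(⟨(p.val.1, p.val.2.val.1),
      p.property.elim Or.inl (fun h => Or.inr h.1)⟩, p.val.2.val.2),
      p.property.elim (fun hx => p.val.2.property.elim (fun hy => Or.inl ⟨hx, hy⟩) Or.inr)
        (fun h => Or.inr h.2)⟩,
    fun p hp => ⟨⟨hp.1, hp.2.1⟩, hp.2.2⟩⟩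
  lHom X := ⟨fun p => p.val.2, fun p hp => hp.2⟩
  lInv X := ⟨fun x => ⟨(PUnit.unit, x), Or.inl trivial⟩, fun x hx => ⟨trivial, hx⟩⟩
  rHom X := ⟨fun p => p.val.1, fun p hp => hp.1⟩
  rInv X := ⟨fun x => ⟨(x, PUnit.unit), Or.inr trivial⟩, fun x hx => ⟨hx, trivial⟩⟩

/-- The duoidal data `(Subset, ⊗, (1,1), ×, (1,1))` on the category of distinguished
subsets, with `ζ` the restricted middle-four interchange, `Δ` and `∇` unitors, and `ε`
the identity. -/
def subsetDuo : DuoidalData SubObj.{u} where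
  p := disjSub
  s := cartSub
  zeta A B C D := ⟨fun p =>
      (⟨(p.val.1.1, p.val.2.1), p.property.imp And.left And.left⟩,
       ⟨(p.val.1.2, p.val.2.2), p.property.imp And.right And.right⟩),
    fun p hp => ⟨⟨hp.1.1, hp.2.1⟩, hp.1.2, hp.2.2⟩⟩
  delta := ⟨fun _ => (PUnit.unit, PUnit.unit), fun _ _ => ⟨trivial, trivial⟩⟩
  nabla := ⟨fun _ => PUnit.unit, fun _ _ => trivial⟩
  eps := ⟨fun _ => PUnit.unit, fun _ _ => trivial⟩

/-- The data of a Freyd category over the monoidal category `M`: a premonoidal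
category with the same objects as `M` (with whiskerings `wL`, `wR`) together with an
identity-on-objects strict premonoidal functor `J`. -/
structure FreydData (M : Type u₂) [Category.{v₂} M] [MonoidalCategory M] where
  hom : M → M → Type u
  ide : ∀ a : M, hom a a
  comp : ∀ {a b c : M}, hom a b → hom b c → hom a c
  wL : ∀ (x : M) {a b : M}, hom a b → hom (x ⊗ a) (x ⊗ b)
  wR : ∀ {a b : M}, hom a b → ∀ x : M, hom (a ⊗ x) (b ⊗ x)
  J : ∀ {a b : M}, (a ⟶ b) → hom a b

/-- Centrality of a morphism in the premonoidal part of a Freyd category. -/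
def FreydData.Central {M : Type u₂} [Category.{v₂} M] [MonoidalCategory M]
    (F : FreydData.{u} M) {a b : M} (f : F.hom a b) : Prop :=
  (∀ {a' b' : M} (g : F.hom a' b'),
      F.comp (F.wR f a') (F.wL b g) = F.comp (F.wL a g) (F.wR f b')) ∧
  (∀ {a' b' : M} (g : F.hom a' b'),
      F.comp (F.wL a' f) (F.wR g b) = F.comp (F.wR g a) (F.wL b' f))

/-- The data of a Freyd category is an actual Freyd category: `C` is a premonoidal
category, `J` is an identity-on-objects strict premonoidal functor, and the image of
`J` is central. -/
structure IsFreyd {M : Type u₂} [Category.{v₂} M] [MonoidalCategory M]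
    (F : FreydData.{u} M) : Prop where
  id_comp : ∀ {a b : M} (f : F.hom a b), F.comp (F.ide a) f = f
  comp_id : ∀ {a b : M} (f : F.hom a b), F.comp f (F.ide b) = f
  comp_assoc : ∀ {a b c e : M} (f : F.hom a b) (g : F.hom b c) (h : F.hom c e),
    F.comp (F.comp f g) h = F.comp f (F.comp g h)
  J_id : ∀ a : M, F.J (𝟙 a) = F.ide a
  J_comp : ∀ {a b c : M} (f : a ⟶ b) (g : b ⟶ c), F.J (f ≫ g) = F.comp (F.J f) (F.J g)
  wL_id : ∀ x a : M, F.wL x (F.ide a) = F.ide (x ⊗ a)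
  wL_comp : ∀ (x : M) {a b c : M} (f : F.hom a b) (g : F.hom b c),
    F.wL x (F.comp f g) = F.comp (F.wL x f) (F.wL x g)
  wR_id : ∀ a x : M, F.wR (F.ide a) x = F.ide (a ⊗ x)
  wR_comp : ∀ {a b c : M} (f : F.hom a b) (g : F.hom b c) (x : M),
    F.wR (F.comp f g) x = F.comp (F.wR f x) (F.wR g x)
  wL_J : ∀ (x : M) {a b : M} (f : a ⟶ b), F.wL x (F.J f) = F.J (x ◁ f)
  wR_J : ∀ {a b : M} (f : a ⟶ b) (x : M), F.wR (F.J f) x = F.J (f ▷ x)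
  central_J : ∀ {a b : M} (f : a ⟶ b), F.Central (F.J f)
  assoc_nat₁ : ∀ {a b : M} (f : F.hom a b) (y z : M),
    F.comp (F.wR (F.wR f y) z) (F.J (α_ b y z).hom)
      = F.comp (F.J (α_ a y z).hom) (F.wR f (y ⊗ z))
  assoc_nat₂ : ∀ (x : M) {a b : M} (f : F.hom a b) (z : M),
    F.comp (F.wR (F.wL x f) z) (F.J (α_ x b z).hom)
      = F.comp (F.J (α_ x a z).hom) (F.wL x (F.wR f z))
  assoc_nat₃ : ∀ (x y : M) {a b : M} (f : F.hom a b),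
    F.comp (F.wL (x ⊗ y) f) (F.J (α_ x y b).hom)
      = F.comp (F.J (α_ x y a).hom) (F.wL x (F.wL y f))
  lunit_nat : ∀ {a b : M} (f : F.hom a b),
    F.comp (F.wL (𝟙_ M) f) (F.J (λ_ b).hom) = F.comp (F.J (λ_ a).hom) f
  runit_nat : ∀ {a b : M} (f : F.hom a b),
    F.comp (F.wR f (𝟙_ M)) (F.J (ρ_ b).hom) = F.comp (F.J (ρ_ a).hom) f

/-- A morphism of Freyd categories: a strong monoidal functor `F₀` on the monoidal
parts and a strong premonoidal functor `F₁` on the premonoidal parts commuting with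
the `J`s. -/
structure FreydHom {M : Type u₂} {M' : Type u₃} [Category.{v₂} M] [MonoidalCategory M]
    [Category.{v₃} M'] [MonoidalCategory M'] (C : FreydData.{u} M)
    (C' : FreydData.{u'} M') where
  F₀ : StrongMonData M M'
  strong : IsStrongMon F₀
  F₁ : ∀ {a b : M}, C.hom a b → C'.hom (F₀.T.obj a) (F₀.T.obj b)
  F₁_id : ∀ a : M, F₁ (C.ide a) = C'.ide (F₀.T.obj a)
  F₁_comp : ∀ {a b c : M} (f : C.hom a b) (g : C.hom b c),
    F₁ (C.comp f g) = C'.comp (F₁ f) (F₁ g)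
  F₁_J : ∀ {a b : M} (f : a ⟶ b), F₁ (C.J f) = C'.J (F₀.T.map f)
  F₁_wL : ∀ (x : M) {a b : M} (f : C.hom a b),
    C'.comp (C'.J (F₀.μm x a).hom) (F₁ (C.wL x f))
      = C'.comp (C'.wL (F₀.T.obj x) (F₁ f)) (C'.J (F₀.μm x b).hom)
  F₁_wR : ∀ {a b : M} (f : C.hom a b) (x : M),
    C'.comp (C'.J (F₀.μm a x).hom) (F₁ (C.wR f x))
      = C'.comp (C'.wR (F₁ f) (F₀.T.obj x)) (C'.J (F₀.μm b x).hom)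

/-- The functor `𝔉 : Freyd → Subset-Freyd` on objects: `𝔉(C)(a,b)` is `C(a,b)` with
the image of `J` as distinguished subset. -/
def frey2sub {M : Type u₂} [Category.{v₂} M] [MonoidalCategory M]
    (F : FreydData.{u} M) (h : IsFreyd F) : VFreydData subsetDuo.{u} M where
  obj a b := ⟨F.hom a b, Set.range (fun f : a ⟶ b => F.J f)⟩
  map f g := ⟨fun k => F.comp (F.J f) (F.comp k (F.J g)),
    fun k hk => by
      obtain ⟨k', rfl⟩ := hk
      exact ⟨f ≫ k' ≫ g, by simp only [h.J_comp]⟩⟩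
  idt a := ⟨fun _ => F.ide a, fun _ _ => ⟨𝟙 a, h.J_id a⟩⟩
  seq a b c := ⟨fun p => F.comp p.1 p.2,
    fun p hp => by
      obtain ⟨⟨k₁, e₁⟩, ⟨k₂, e₂⟩⟩ := hp
      exact ⟨k₁ ≫ k₂, by simp only [h.J_comp, e₁, e₂]⟩⟩
  zero := ⟨fun _ => F.ide (𝟙_ M), fun _ _ => ⟨𝟙 (𝟙_ M), h.J_id _⟩⟩
  par a₁ b₁ a₂ b₂ := ⟨fun p => F.comp (F.wR p.val.1 a₂) (F.wL b₁ p.val.2),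
    fun p hp => by
      obtain ⟨⟨k₁, e₁⟩, ⟨k₂, e₂⟩⟩ := hp
      exact ⟨k₁ ⊗ₘ k₂, by
        simp only [MonoidalCategory.tensorHom_def, h.J_comp, ← h.wR_J, ← h.wL_J, e₁, e₂]⟩⟩

/-- The functor `𝔘 : Subset-Freyd → Freyd` on objects: `𝔘(C)` has the underlying sets
of `C(a,b)` as homsets, with composition `seq`, identities `idt(⋆)`,
`J(f) = C(id,f)(idt(⋆))`, and whiskerings induced by `par` and `idt(⋆)`. -/
def sub2frey {M : Type u₂} [Category.{v₂} M] [MonoidalCategory M]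
    (C : VFreydData subsetDuo.{u} M) : FreydData.{u} M where
  hom a b := (C.obj a b).carrier
  ide a := SubHom.toFun (C.idt a) PUnit.unit
  comp f g := SubHom.toFun (C.seq _ _ _) (f, g)
  wL := fun x {a b} f => SubHom.toFun (C.par x x a b)
    ⟨(SubHom.toFun (C.idt x) PUnit.unit, f), Or.inl ((C.idt x).maps _ trivial)⟩
  wR := fun {a b} f x => SubHom.toFun (C.par a b x x)
    ⟨(f, SubHom.toFun (C.idt x) PUnit.unit), Or.inr ((C.idt x).maps _ trivial)⟩
  J f := SubHom.toFun (C.map (𝟙 _) f) (SubHom.toFun (C.idt _) PUnit.unit)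

/-- The identity strong monoidal functor data. -/
def idStrongMon (M : Type u₂) [Category.{v₂} M] [MonoidalCategory M] :
    StrongMonData M M where
  T := Functor.id M
  εm := Iso.refl _
  μm a b := Iso.refl _


section AuxHelpers

variable {M : Type u₂} [Category.{v₂} M] [MonoidalCategory M]

lemma idStrongMon_is (M : Type u₂) [Category.{v₂} M] [MonoidalCategory M] :
    IsStrongMon (idStrongMon M) := by
  constructor <;> intros <;>
    simp [idStrongMon]

section Elementwise

variable {C : VFreydData subsetDuo.{u} M} (hC : IsVFreyd C)
include hC

/-- `seq (idt, x) = x` elementwise. -/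
lemma ew_idt_seq {a b : M} (x : (C.obj a b).carrier) :
    (C.seq a a b).toFun ((C.idt a).toFun PUnit.unit, x) = x :=
  congrFun (congrArg SubHom.toFun (hC.idt_seq a b)) (PUnit.unit, x)

/-- `seq (x, idt) = x` elementwise. -/
lemma ew_seq_idt {a b : M} (x : (C.obj a b).carrier) :
    (C.seq a b b).toFun (x, (C.idt b).toFun PUnit.unit) = x :=
  congrFun (congrArg SubHom.toFun (hC.seq_idt a b)) (x, PUnit.unit)

lemma ew_map_id {a b : M} (x : (C.obj a b).carrier) :
    (C.map (𝟙 a) (𝟙 b)).toFun x = x :=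
  congrFun (congrArg SubHom.toFun (hC.map_id a b)) x

lemma ew_seq_nat {a a' c c' : M} (f : a' ⟶ a) (g : c ⟶ c') (b : M)
    (x : (C.obj a b).carrier) (y : (C.obj b c).carrier) :
    (C.seq a' b c').toFun ((C.map f (𝟙 b)).toFun x, (C.map (𝟙 b) g).toFun y)
      = (C.map f g).toFun ((C.seq a b c).toFun (x, y)) :=
  congrFun (congrArg SubHom.toFun (hC.seq_nat f g b)) (x, y)

lemma ew_seq_extra {b b' : M} (f : b ⟶ b') (a c : M)
    (x : (C.obj a b).carrier) (y : (C.obj b' c).carrier) :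
    (C.seq a b' c).toFun ((C.map (𝟙 a) f).toFun x, y)
      = (C.seq a b c).toFun (x, (C.map f (𝟙 c)).toFun y) :=
  congrFun (congrArg SubHom.toFun (hC.seq_extra f a c)) (x, y)

lemma ew_idt_extra {a b : M} (f : a ⟶ b) :
    (C.map (𝟙 a) f).toFun ((C.idt a).toFun PUnit.unit)
      = (C.map f (𝟙 b)).toFun ((C.idt b).toFun PUnit.unit) :=
  congrFun (congrArg SubHom.toFun (hC.idt_extra f)) PUnit.unit

lemma ew_map_map {a a' b b' : M} (f : a' ⟶ a) (g : b ⟶ b') (x : (C.obj a b).carrier) :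
    (C.map f (𝟙 b')).toFun ((C.map (𝟙 a) g).toFun x) = (C.map f g).toFun x := by
  have := congrFun (congrArg SubHom.toFun (hC.map_comp (𝟙 a) f g (𝟙 b'))) x
  simp only [Category.comp_id, Category.id_comp] at this
  exact this.symm

/-- `comp (J f) k = map f 𝟙 k` in `sub2frey C`. -/
lemma ew_J_comp {a b c : M} (f : a ⟶ b) (k : (C.obj b c).carrier) :
    (C.seq a b c).toFun ((C.map (𝟙 a) f).toFun ((C.idt a).toFun PUnit.unit), k)
      = (C.map f (𝟙 c)).toFun k := by
  rw [ew_idt_extra hC f]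
  have := ew_seq_nat hC f (𝟙 c) b ((C.idt b).toFun PUnit.unit) k
  rw [ew_map_id hC, ew_idt_seq hC] at this
  exact this

/-- `comp k (J g) = map 𝟙 g k` in `sub2frey C`. -/
lemma ew_comp_J {a b c : M} (g : b ⟶ c) (k : (C.obj a b).carrier) :
    (C.seq a b c).toFun (k, (C.map (𝟙 b) g).toFun ((C.idt b).toFun PUnit.unit))
      = (C.map (𝟙 a) g).toFun k := by
  have := ew_seq_nat hC (𝟙 a) g b k ((C.idt b).toFun PUnit.unit)
  rw [ew_map_id hC, ew_seq_idt hC] at this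
  exact this

/-- In `sub2frey C`, `comp (wR f a₂) (wL b₁ g) = par (f, g)` whenever `f` or `g` is
distinguished. -/
lemma ew_par_decomp {a₁ b₁ a₂ b₂ : M}
    (f : (C.obj a₁ b₁).carrier) (g : (C.obj a₂ b₂).carrier)
    (hfg : f ∈ (C.obj a₁ b₁).dist ∨ g ∈ (C.obj a₂ b₂).dist) :
    (C.seq (a₁ ⊗ a₂) (b₁ ⊗ a₂) (b₁ ⊗ b₂)).toFun
      ((C.par a₁ b₁ a₂ a₂).toFun
        ⟨(f, (C.idt a₂).toFun PUnit.unit), Or.inr ((C.idt a₂).maps _ trivial)⟩,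
       (C.par b₁ b₁ a₂ b₂).toFun
        ⟨((C.idt b₁).toFun PUnit.unit, g), Or.inl ((C.idt b₁).maps _ trivial)⟩)
    = (C.par a₁ b₁ a₂ b₂).toFun ⟨(f, g), hfg⟩ := by
  have hq : ((f, (C.idt b₁).toFun PUnit.unit), ((C.idt a₂).toFun PUnit.unit, g)) ∈
      {p : ((C.obj a₁ b₁).carrier × (C.obj b₁ b₁).carrier) ×
        ((C.obj a₂ a₂).carrier × (C.obj a₂ b₂).carrier) |
          (p.1.1 ∈ (C.obj a₁ b₁).dist ∧ p.1.2 ∈ (C.obj b₁ b₁).dist) ∨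
          (p.2.1 ∈ (C.obj a₂ a₂).dist ∧ p.2.2 ∈ (C.obj a₂ b₂).dist)} :=
    hfg.imp (fun hf => ⟨hf, (C.idt b₁).maps _ trivial⟩)
      (fun hg => ⟨(C.idt a₂).maps _ trivial, hg⟩)
  have E : (C.seq (a₁ ⊗ a₂) (b₁ ⊗ a₂) (b₁ ⊗ b₂)).toFun
      ((C.par a₁ b₁ a₂ a₂).toFun
        ⟨(f, (C.idt a₂).toFun PUnit.unit), Or.inr ((C.idt a₂).maps _ trivial)⟩,
       (C.par b₁ b₁ a₂ b₂).toFun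
        ⟨((C.idt b₁).toFun PUnit.unit, g), Or.inl ((C.idt b₁).maps _ trivial)⟩)
      = (C.par a₁ b₁ a₂ b₂).toFun
        ⟨((C.seq a₁ b₁ b₁).toFun (f, (C.idt b₁).toFun PUnit.unit),
          (C.seq a₂ a₂ b₂).toFun ((C.idt a₂).toFun PUnit.unit, g)),
         by rw [ew_seq_idt hC, ew_idt_seq hC]; exact hfg⟩ :=
    congrFun (congrArg SubHom.toFun (hC.exchange a₁ b₁ b₁ a₂ a₂ b₂))
      ⟨((f, (C.idt b₁).toFun PUnit.unit), ((C.idt a₂).toFun PUnit.unit, g)), hq⟩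
  rw [E]
  congr 1
  refine Subtype.ext ?_
  show ((C.seq a₁ b₁ b₁).toFun (f, (C.idt b₁).toFun PUnit.unit),
    (C.seq a₂ a₂ b₂).toFun ((C.idt a₂).toFun PUnit.unit, g)) = (f, g)
  rw [ew_seq_idt hC, ew_idt_seq hC]

/-- `comp (J f) k = map f 𝟙 k` in `sub2frey C`, stated at the level of `sub2frey`. -/
lemma ewU_J_comp {a b c : M} (f : a ⟶ b) (k : (sub2frey C).hom b c) :
    (sub2frey C).comp ((sub2frey C).J f) k = (C.map f (𝟙 c)).toFun k :=
  ew_J_comp hC f k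

/-- `comp k (J g) = map 𝟙 g k` in `sub2frey C`, stated at the level of `sub2frey`. -/
lemma ewU_comp_J {a b c : M} (g : b ⟶ c) (k : (sub2frey C).hom a b) :
    (sub2frey C).comp k ((sub2frey C).J g) = (C.map (𝟙 a) g).toFun k :=
  ew_comp_J hC g k

/-- The identity morphism of Freyd categories on `sub2frey C`. -/
def idFreydHom : FreydHom (sub2frey C) (sub2frey C) where
  F₀ := idStrongMon M
  strong := idStrongMon_is M
  F₁ := fun f => f
  F₁_id a := rfl
  F₁_comp f g := rfl
  F₁_J f := rfl
  F₁_wL x {a b} f := by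
    show (sub2frey C).comp ((sub2frey C).J (𝟙 (x ⊗ a))) ((sub2frey C).wL x f)
      = (sub2frey C).comp ((sub2frey C).wL x f) ((sub2frey C).J (𝟙 (x ⊗ b)))
    rw [ewU_J_comp hC, ewU_comp_J hC]
  F₁_wR {a b} f x := by
    show (sub2frey C).comp ((sub2frey C).J (𝟙 (a ⊗ x))) ((sub2frey C).wR f x)
      = (sub2frey C).comp ((sub2frey C).wR f x) ((sub2frey C).J (𝟙 (b ⊗ x)))
    rw [ewU_J_comp hC, ewU_comp_J hC]

end Elementwise


section Conversions

variable {M' : Type u₃} [Category.{v₃} M'] [MonoidalCategory M']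
variable (F : FreydData.{u} M) (h : IsFreyd F)
variable {C : VFreydData subsetDuo.{u} M'} (hC : IsVFreyd C)

/-- The forward direction of the adjunction bijection. -/
def toFreydHom (G : VFreydHom (frey2sub F h) C) : FreydHom F (sub2frey C) where
  F₀ := G.F₀
  strong := G.strong
  F₁ := fun {a b} f => (G.app a b).toFun f
  F₁_id := fun a => congrFun (congrArg SubHom.toFun (G.hidt a)) PUnit.unit
  F₁_comp := fun {a b c} f g => congrFun (congrArg SubHom.toFun (G.hseq a b c)) (f, g)
  F₁_J := fun {a b} f => by
    have n : (G.app a b).toFun (F.comp (F.J (𝟙 a)) (F.comp (F.ide a) (F.J f)))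
        = (C.map (G.F₀.T.map (𝟙 a)) (G.F₀.T.map f)).toFun ((G.app a a).toFun (F.ide a)) :=
      congrFun (congrArg SubHom.toFun (G.naturality (𝟙 a) f)) (F.ide a)
    have hi : (G.app a a).toFun (F.ide a) = (C.idt (G.F₀.T.obj a)).toFun PUnit.unit :=
      congrFun (congrArg SubHom.toFun (G.hidt a)) PUnit.unit
    rw [h.J_id, h.id_comp, h.id_comp, G.F₀.T.map_id, hi] at n
    exact n
  F₁_wL := fun x {a b} f => by
    have hi : (G.app x x).toFun (F.ide x) = (C.idt (G.F₀.T.obj x)).toFun PUnit.unit :=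
      congrFun (congrArg SubHom.toFun (G.hidt x)) PUnit.unit
    have hp :
        (C.map (𝟙 (G.F₀.T.obj x ⊗ G.F₀.T.obj a)) (G.F₀.μm x b).hom).toFun
          ((C.par (G.F₀.T.obj x) (G.F₀.T.obj x) (G.F₀.T.obj a) (G.F₀.T.obj b)).toFun
            ⟨((G.app x x).toFun (F.ide x), (G.app a b).toFun f),
              Or.inl ((G.app x x).maps _ ⟨𝟙 x, h.J_id x⟩)⟩)
        = (C.map (G.F₀.μm x a).hom (𝟙 (G.F₀.T.obj (x ⊗ b)))).toFun
            ((G.app (x ⊗ a) (x ⊗ b)).toFun (F.comp (F.wR (F.ide x) a) (F.wL x f))) :=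
      congrFun (congrArg SubHom.toFun (G.hpar x x a b)) ⟨(F.ide x, f), Or.inl ⟨𝟙 x, h.J_id x⟩⟩
    rw [h.wR_id, h.id_comp] at hp
    refine (ew_J_comp hC (G.F₀.μm x a).hom _).trans
      (Eq.trans ?_ (ew_comp_J hC (G.F₀.μm x b).hom _).symm)
    refine hp.symm.trans ?_
    exact congrArg (C.map _ _).toFun
      (congrArg (C.par _ _ _ _).toFun (Subtype.ext (Prod.ext hi rfl)))
  F₁_wR := fun {a b} f x => by
    have hi : (G.app x x).toFun (F.ide x) = (C.idt (G.F₀.T.obj x)).toFun PUnit.unit :=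
      congrFun (congrArg SubHom.toFun (G.hidt x)) PUnit.unit
    have hp :
        (C.map (𝟙 (G.F₀.T.obj a ⊗ G.F₀.T.obj x)) (G.F₀.μm b x).hom).toFun
          ((C.par (G.F₀.T.obj a) (G.F₀.T.obj b) (G.F₀.T.obj x) (G.F₀.T.obj x)).toFun
            ⟨((G.app a b).toFun f, (G.app x x).toFun (F.ide x)),
              Or.inr ((G.app x x).maps _ ⟨𝟙 x, h.J_id x⟩)⟩)
        = (C.map (G.F₀.μm a x).hom (𝟙 (G.F₀.T.obj (b ⊗ x)))).toFun
            ((G.app (a ⊗ x) (b ⊗ x)).toFun (F.comp (F.wR f x) (F.wL b (F.ide x)))) :=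
      congrFun (congrArg SubHom.toFun (G.hpar a b x x)) ⟨(f, F.ide x), Or.inr ⟨𝟙 x, h.J_id x⟩⟩
    rw [h.wL_id, h.comp_id] at hp
    refine (ew_J_comp hC (G.F₀.μm a x).hom _).trans
      (Eq.trans ?_ (ew_comp_J hC (G.F₀.μm b x).hom _).symm)
    refine hp.symm.trans ?_
    exact congrArg (C.map _ _).toFun
      (congrArg (C.par _ _ _ _).toFun (Subtype.ext (Prod.ext rfl hi)))

lemma F₁_mem (H : FreydHom F (sub2frey C)) {a b : M} {f : F.hom a b}
    (hf : f ∈ Set.range (fun k : a ⟶ b => F.J k)) :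
    H.F₁ f ∈ (C.obj (H.F₀.T.obj a) (H.F₀.T.obj b)).dist := by
  obtain ⟨k, rfl⟩ := hf
  rw [H.F₁_J]
  exact (C.map _ _).maps _ ((C.idt _).maps _ trivial)

/-- The backward direction of the adjunction bijection. -/
def toVFreydHom (H : FreydHom F (sub2frey C)) : VFreydHom (frey2sub F h) C where
  F₀ := H.F₀
  strong := H.strong
  app a b := ⟨fun f => H.F₁ f, fun f hf => F₁_mem F H hf⟩
  naturality {a a' b b'} f g := by
    refine SubHom.ext ?_
    funext k
    show H.F₁ (F.comp (F.J f) (F.comp k (F.J g)))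
      = (C.map (H.F₀.T.map f) (H.F₀.T.map g)).toFun (H.F₁ k)
    erw [H.F₁_comp, H.F₁_comp, H.F₁_J, H.F₁_J, ewU_comp_J hC, ewU_J_comp hC,
      ew_map_map hC]
  hidt a := by
    refine SubHom.ext ?_
    funext u
    cases u
    exact H.F₁_id a
  hseq a b c := by
    refine SubHom.ext ?_
    funext p
    exact H.F₁_comp p.1 p.2
  hpar a₁ b₁ a₂ b₂ := by
    refine SubHom.ext ?_
    funext p
    obtain ⟨⟨f, g⟩, hor⟩ := p
    have hfg : H.F₁ f ∈ (C.obj (H.F₀.T.obj a₁) (H.F₀.T.obj b₁)).dist ∨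
        H.F₁ g ∈ (C.obj (H.F₀.T.obj a₂) (H.F₀.T.obj b₂)).dist :=
      hor.imp (fun hf => F₁_mem F H hf) (fun hg => F₁_mem F H hg)
    have A : (C.map (H.F₀.μm a₁ a₂).hom (𝟙 (H.F₀.T.obj (b₁ ⊗ a₂)))).toFun
          (H.F₁ (F.wR f a₂))
        = (C.map (𝟙 (H.F₀.T.obj a₁ ⊗ H.F₀.T.obj a₂)) (H.F₀.μm b₁ a₂).hom).toFun
          ((sub2frey C).wR (H.F₁ f) (H.F₀.T.obj a₂)) := by
      have := H.F₁_wR f a₂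
      rw [ewU_J_comp hC, ewU_comp_J hC] at this
      exact this
    have B : (C.map (H.F₀.μm b₁ a₂).hom (𝟙 (H.F₀.T.obj (b₁ ⊗ b₂)))).toFun
          (H.F₁ (F.wL b₁ g))
        = (C.map (𝟙 (H.F₀.T.obj b₁ ⊗ H.F₀.T.obj a₂)) (H.F₀.μm b₁ b₂).hom).toFun
          ((sub2frey C).wL (H.F₀.T.obj b₁) (H.F₁ g)) := by
      have := H.F₁_wL b₁ g
      rw [ewU_J_comp hC, ewU_comp_J hC] at this
      exact this
    show (C.map (𝟙 (H.F₀.T.obj a₁ ⊗ H.F₀.T.obj a₂)) (H.F₀.μm b₁ b₂).hom).toFun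
        ((C.par (H.F₀.T.obj a₁) (H.F₀.T.obj b₁) (H.F₀.T.obj a₂) (H.F₀.T.obj b₂)).toFun
          ⟨(H.F₁ f, H.F₁ g), hfg⟩)
      = (C.map (H.F₀.μm a₁ a₂).hom (𝟙 (H.F₀.T.obj (b₁ ⊗ b₂)))).toFun
          (H.F₁ (F.comp (F.wR f a₂) (F.wL b₁ g)))
    refine Eq.symm ?_
    calc (C.map (H.F₀.μm a₁ a₂).hom (𝟙 (H.F₀.T.obj (b₁ ⊗ b₂)))).toFun
          (H.F₁ (F.comp (F.wR f a₂) (F.wL b₁ g)))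
        = (C.map (H.F₀.μm a₁ a₂).hom (𝟙 (H.F₀.T.obj (b₁ ⊗ b₂)))).toFun
            ((C.seq (H.F₀.T.obj (a₁ ⊗ a₂)) (H.F₀.T.obj (b₁ ⊗ a₂)) (H.F₀.T.obj (b₁ ⊗ b₂))).toFun
              (H.F₁ (F.wR f a₂), H.F₁ (F.wL b₁ g))) :=
          congrArg _ (H.F₁_comp _ _)
      _ = (C.seq (H.F₀.T.obj a₁ ⊗ H.F₀.T.obj a₂) (H.F₀.T.obj (b₁ ⊗ a₂))
            (H.F₀.T.obj (b₁ ⊗ b₂))).toFun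
            ((C.map (H.F₀.μm a₁ a₂).hom (𝟙 (H.F₀.T.obj (b₁ ⊗ a₂)))).toFun (H.F₁ (F.wR f a₂)),
             (C.map (𝟙 (H.F₀.T.obj (b₁ ⊗ a₂))) (𝟙 (H.F₀.T.obj (b₁ ⊗ b₂)))).toFun
               (H.F₁ (F.wL b₁ g))) :=
          (ew_seq_nat hC _ _ _ _ _).symm
      _ = (C.seq (H.F₀.T.obj a₁ ⊗ H.F₀.T.obj a₂) (H.F₀.T.obj (b₁ ⊗ a₂))
            (H.F₀.T.obj (b₁ ⊗ b₂))).toFun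
            ((C.map (𝟙 (H.F₀.T.obj a₁ ⊗ H.F₀.T.obj a₂)) (H.F₀.μm b₁ a₂).hom).toFun
               ((sub2frey C).wR (H.F₁ f) (H.F₀.T.obj a₂)),
             H.F₁ (F.wL b₁ g)) :=
          congrArg (C.seq _ _ _).toFun (Prod.ext A (ew_map_id hC _))
      _ = (C.seq (H.F₀.T.obj a₁ ⊗ H.F₀.T.obj a₂) (H.F₀.T.obj b₁ ⊗ H.F₀.T.obj a₂)
            (H.F₀.T.obj (b₁ ⊗ b₂))).toFun
            ((sub2frey C).wR (H.F₁ f) (H.F₀.T.obj a₂),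
             (C.map (H.F₀.μm b₁ a₂).hom (𝟙 (H.F₀.T.obj (b₁ ⊗ b₂)))).toFun
               (H.F₁ (F.wL b₁ g))) :=
          ew_seq_extra hC _ _ _ _ _
      _ = (C.seq (H.F₀.T.obj a₁ ⊗ H.F₀.T.obj a₂) (H.F₀.T.obj b₁ ⊗ H.F₀.T.obj a₂)
            (H.F₀.T.obj (b₁ ⊗ b₂))).toFun
            ((sub2frey C).wR (H.F₁ f) (H.F₀.T.obj a₂),
             (C.map (𝟙 (H.F₀.T.obj b₁ ⊗ H.F₀.T.obj a₂)) (H.F₀.μm b₁ b₂).hom).toFun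
               ((sub2frey C).wL (H.F₀.T.obj b₁) (H.F₁ g))) :=
          congrArg (C.seq _ _ _).toFun (Prod.ext rfl B)
      _ = (C.map (𝟙 (H.F₀.T.obj a₁ ⊗ H.F₀.T.obj a₂)) (H.F₀.μm b₁ b₂).hom).toFun
            ((C.seq (H.F₀.T.obj a₁ ⊗ H.F₀.T.obj a₂) (H.F₀.T.obj b₁ ⊗ H.F₀.T.obj a₂)
              (H.F₀.T.obj b₁ ⊗ H.F₀.T.obj b₂)).toFun
              ((sub2frey C).wR (H.F₁ f) (H.F₀.T.obj a₂),
               (sub2frey C).wL (H.F₀.T.obj b₁) (H.F₁ g))) := by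
          have := ew_seq_nat hC (𝟙 (H.F₀.T.obj a₁ ⊗ H.F₀.T.obj a₂)) (H.F₀.μm b₁ b₂).hom
            (H.F₀.T.obj b₁ ⊗ H.F₀.T.obj a₂)
            ((sub2frey C).wR (H.F₁ f) (H.F₀.T.obj a₂))
            ((sub2frey C).wL (H.F₀.T.obj b₁) (H.F₁ g))
          erw [ew_map_id hC] at this
          exact this
      _ = (C.map (𝟙 (H.F₀.T.obj a₁ ⊗ H.F₀.T.obj a₂)) (H.F₀.μm b₁ b₂).hom).toFun
            ((C.par (H.F₀.T.obj a₁) (H.F₀.T.obj b₁) (H.F₀.T.obj a₂) (H.F₀.T.obj b₂)).toFun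
              ⟨(H.F₁ f, H.F₁ g), hfg⟩) :=
          congrArg _ (ew_par_decomp hC _ _ hfg)

end Conversions

/-- The identity morphism of `Subset`-Freyd categories. -/
def idVHom (C : VFreydData subsetDuo.{u} M) : VFreydHom C C where
  F₀ := idStrongMon M
  strong := idStrongMon_is M
  app a b := ⟨fun f => f, fun _ hf => hf⟩
  naturality f g := rfl
  hidt a := rfl
  hseq a b c := rfl
  hpar a₁ b₁ a₂ b₂ := rfl

/-- Transport of the identity along an equality of `Subset`-Freyd categories. -/
def eqVHom {C D : VFreydData subsetDuo.{u} M} (e : C = D) : VFreydHom C D := e ▸ idVHom C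

lemma eqVHom_F₀ {C D : VFreydData subsetDuo.{u} M} (e : C = D) :
    (eqVHom e).F₀ = idStrongMon M := by cases e; rfl

lemma eqVHom_app {C D : VFreydData subsetDuo.{u} M} (e : C = D) (a b : M) :
    HEq ((eqVHom e).app a b).toFun (fun f : (C.obj a b).carrier => f) := by cases e; rfl

lemma freydData_ext {F G : FreydData.{u} M}
    (hh : F.hom = G.hom)
    (hi : HEq F.ide G.ide)
    (hc : HEq (@FreydData.comp _ _ _ F) (@FreydData.comp _ _ _ G))
    (hl : HEq (@FreydData.wL _ _ _ F) (@FreydData.wL _ _ _ G))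
    (hr : HEq (@FreydData.wR _ _ _ F) (@FreydData.wR _ _ _ G))
    (hj : HEq (@FreydData.J _ _ _ F) (@FreydData.J _ _ _ G)) : F = G := by
  cases F; cases G
  cases hh; cases hi; cases hc; cases hl; cases hr; cases hj; rfl

/-- Part 1: `𝔘𝔉 = Id`. -/
lemma part1 (F : FreydData.{u} M) (h : IsFreyd F) : sub2frey (frey2sub F h) = F := by
  refine freydData_ext rfl (heq_of_eq ?_) (heq_of_eq ?_) (heq_of_eq ?_) (heq_of_eq ?_)
    (heq_of_eq ?_)
  · rfl
  · rfl
  · show (fun x {a b} f => F.comp (F.wR (F.ide x) a) (F.wL x f)) = @FreydData.wL _ _ _ F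
    funext x a b f
    rw [h.wR_id, h.id_comp]
  · show (fun {a b} f x => F.comp (F.wR f x) (F.wL b (F.ide x))) = @FreydData.wR _ _ _ F
    funext a b f x
    rw [h.wL_id, h.comp_id]
  · show (fun {a b} f => F.comp (F.J (𝟙 a)) (F.comp (F.ide a) (F.J f))) = @FreydData.J _ _ _ F
    funext a b f
    rw [h.J_id, h.id_comp, h.id_comp]

end AuxHelpers

/-- `𝔉 : Freyd → Subset-Freyd` is left adjoint to `𝔘 : Subset-Freyd → Freyd`:
`𝔘𝔉 = Id`, the unit of the adjunction may be taken to be the identity, the counit at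
`C` has first component `Id_M` and second component the identity function on each
`C(a,b)`, the adjunction gives a bijection of hom-sets, and it is idempotent (the
counit at objects in the image of `𝔉` is invertible). -/
theorem frey2sub_adjoint_sub2frey :
    -- 𝔘𝔉 = Id, so the unit may be taken to be the identity
    (∀ {M : Type u₂} [Category.{v₂} M] [MonoidalCategory M]
      (F : FreydData.{u} M) (h : IsFreyd F), sub2frey (frey2sub F h) = F) ∧
    -- the counit, with identity components
    (∀ {M : Type u₂} [Category.{v₂} M] [MonoidalCategory M]
      (C : VFreydData subsetDuo.{u} M) (hC : IsVFreyd C)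
      (hU : IsFreyd (sub2frey C)),
      ∃ ε : VFreydHom (frey2sub (sub2frey C) hU) C,
        ε.F₀ = idStrongMon M ∧
        ∀ a b : M, HEq (SubHom.toFun (ε.app a b)) (fun f : (C.obj a b).carrier => f)) ∧
    -- the adjunction bijection between hom-sets
    (∀ {M : Type u₂} {M' : Type u₃} [Category.{v₂} M] [MonoidalCategory M]
      [Category.{v₃} M'] [MonoidalCategory M']
      (F : FreydData.{u} M) (h : IsFreyd F) (C : VFreydData subsetDuo.{u} M')
      (hC : IsVFreyd C),
      ∃ Φ : VFreydHom (frey2sub F h) C ≃ FreydHom F (sub2frey C),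
        ∀ G : VFreydHom (frey2sub F h) C,
          (Φ G).F₀ = G.F₀ ∧
          ∀ (a b : M) (f : F.hom a b), HEq ((Φ G).F₁ f) (SubHom.toFun (G.app a b) f)) ∧
    -- idempotency: the counit at `𝔉 F` is invertible
    (∀ {M : Type u₂} [Category.{v₂} M] [MonoidalCategory M]
      (F : FreydData.{u} M) (h : IsFreyd F)
      (hU : IsFreyd (sub2frey (frey2sub F h))),
      ∃ (ε : VFreydHom (frey2sub (sub2frey (frey2sub F h)) hU) (frey2sub F h))
        (δ : VFreydHom (frey2sub F h) (frey2sub (sub2frey (frey2sub F h)) hU)),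
        ε.F₀ = idStrongMon M ∧ δ.F₀ = idStrongMon M ∧
        (∀ a b : M, HEq (SubHom.toFun (ε.app a b)) (fun f : F.hom a b => f)) ∧
        (∀ a b : M, HEq (SubHom.toFun (δ.app a b)) (fun f : F.hom a b => f))) := by
  refine ⟨?_, ?_, ?_, ?_⟩
  · intro M _ _ F h
    exact part1 F h
  · intro M _ _ C hC hU
    exact ⟨toVFreydHom (sub2frey C) hU hC (idFreydHom hC), rfl, fun a b => HEq.rfl⟩
  · intro M M' _ _ _ _ F h C hC
    exact ⟨⟨fun G => toFreydHom F h hC G, fun H => toVFreydHom F h hC H,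
      fun G => rfl, fun H => rfl⟩, fun G => ⟨rfl, fun a b f => HEq.rfl⟩⟩
  · intro M _ _ F h hU
    have e : sub2frey (frey2sub F h) = F := part1 F h
    have key : ∀ (G : FreydData.{u} M) (eG : sub2frey (frey2sub F h) = G) (hG : IsFreyd G),
        frey2sub (sub2frey (frey2sub F h)) hU = frey2sub G hG := by
      rintro G rfl hG; rfl
    have e2 : frey2sub (sub2frey (frey2sub F h)) hU = frey2sub F h := key F e h
    exact ⟨eqVHom e2, eqVHom e2.symm, eqVHom_F₀ e2, eqVHom_F₀ e2.symm,
      fun a b => eqVHom_app e2 a b, fun a b => eqVHom_app e2.symm a b⟩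
end

section
/- Let V be a cocomplete duoidal category and M a small monoidal category. Then the functor hom̲_M : M^op × M → V defined on objects by hom̲_M(a,b) = ∐_{σ ∈ M(a,b)} I is lax monoidal from M^op × M (monoidal componentwise via ⊕) to (V, *, J), with unit coherence η : J → hom̲_M(e,e) given by ε : J → I followed by the coprojection at id_e, and multiplication μ given by cocontinuity of * followed componentwise by ∇ : I * I → I and the coprojections at σ₁ ⊕ σ₂. -/
set_option linter.unusedVariables false
open CategoryTheory CategoryTheory.Limits MonoidalCategory

universe w v u v₁ u₁ v₂ u₂ v₃ u₃

/-- The data of a lax monoidal functor `M^op × M → (V, m)` (with `M^op × M` monoidal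
componentwise via `⊕`). -/
structure LaxMonData {V : Type u₁} [Category.{v₁} V] (m : MonStrData V)
    (M : Type u₂) [Category.{v₂} M] [MonoidalCategory M] where
  obj : M → M → V
  map : ∀ {a a' b b' : M}, (a' ⟶ a) → (b ⟶ b') → (obj a b ⟶ obj a' b')
  η : m.unit ⟶ obj (𝟙_ M) (𝟙_ M)
  μ : ∀ a₁ b₁ a₂ b₂ : M, m.t (obj a₁ b₁) (obj a₂ b₂) ⟶ obj (a₁ ⊗ a₂) (b₁ ⊗ b₂)

/-- The data of a lax monoidal functor is an actual lax monoidal functor. -/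
structure IsLaxMon {V : Type u₁} [Category.{v₁} V] {m : MonStrData V}
    {M : Type u₂} [Category.{v₂} M] [MonoidalCategory M] (S : LaxMonData m M) : Prop where
  map_id : ∀ a b : M, S.map (𝟙 a) (𝟙 b) = 𝟙 (S.obj a b)
  map_comp : ∀ {a a' a'' b b' b'' : M} (f : a' ⟶ a) (f' : a'' ⟶ a') (g : b ⟶ b')
    (g' : b' ⟶ b''), S.map (f' ≫ f) (g ≫ g') = S.map f g ≫ S.map f' g'
  μ_nat : ∀ {a₁ a₁' b₁ b₁' a₂ a₂' b₂ b₂' : M}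
    (f₁ : a₁' ⟶ a₁) (g₁ : b₁ ⟶ b₁') (f₂ : a₂' ⟶ a₂) (g₂ : b₂ ⟶ b₂'),
    m.tHom (S.map f₁ g₁) (S.map f₂ g₂) ≫ S.μ a₁' b₁' a₂' b₂'
      = S.μ a₁ b₁ a₂ b₂ ≫ S.map (f₁ ⊗ₘ f₂) (g₁ ⊗ₘ g₂)
  assoc : ∀ a₁ b₁ a₂ b₂ a₃ b₃ : M,
    m.tHom (S.μ a₁ b₁ a₂ b₂) (𝟙 (S.obj a₃ b₃)) ≫ S.μ (a₁ ⊗ a₂) (b₁ ⊗ b₂) a₃ b₃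
        ≫ S.map (α_ a₁ a₂ a₃).inv (α_ b₁ b₂ b₃).hom
      = m.aHom (S.obj a₁ b₁) (S.obj a₂ b₂) (S.obj a₃ b₃)
          ≫ m.tHom (𝟙 (S.obj a₁ b₁)) (S.μ a₂ b₂ a₃ b₃) ≫ S.μ a₁ b₁ (a₂ ⊗ a₃) (b₂ ⊗ b₃)
  left_unit : ∀ a b : M,
    m.tHom S.η (𝟙 (S.obj a b)) ≫ S.μ (𝟙_ M) (𝟙_ M) a b ≫ S.map (λ_ a).inv (λ_ b).hom
      = m.lHom (S.obj a b)
  right_unit : ∀ a b : M,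
    m.tHom (𝟙 (S.obj a b)) S.η ≫ S.μ a b (𝟙_ M) (𝟙_ M) ≫ S.map (ρ_ a).inv (ρ_ b).hom
      = m.rHom (S.obj a b)

/-- The tensoring-on-the-left functor of a monoidal structure. -/
def tLeft {V : Type u₁} [Category.{v₁} V] (m : MonStrData V) (hm : IsMonStr m)
    (X : V) : V ⥤ V where
  obj Y := m.t X Y
  map f := m.tHom (𝟙 X) f
  map_id := fun Y => hm.tHom_id X Y
  map_comp := by intro Y Z W f g; (try dsimp only); rw [← hm.tHom_comp]; simp

/-- The tensoring-on-the-right functor of a monoidal structure. -/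
def tRight {V : Type u₁} [Category.{v₁} V] (m : MonStrData V) (hm : IsMonStr m)
    (X : V) : V ⥤ V where
  obj Y := m.t Y X
  map f := m.tHom f (𝟙 X)
  map_id := fun Y => hm.tHom_id Y X
  map_comp := by intro Y Z W f g; (try dsimp only); rw [← hm.tHom_comp]; simp

section Cocomplete

open CategoryTheory.Limits

variable {V : Type u₁} [Category.{v₁} V] [HasColimits V]
variable {M : Type v₁} [Category.{v₁} M] [MonoidalCategory M]

/-- The object part of `hom̲_M(a,b) = ∐_{σ ∈ M(a,b)} I`. -/
noncomputable def ehomObj (d : DuoidalData V) (a b : M) : V :=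
  ∐ fun _ : (a ⟶ b) => d.s.unit

/-- The functorial action of `hom̲_M`, by reindexing along pre- and post-composition. -/
noncomputable def ehomMap (d : DuoidalData V) {a a' b b' : M} (f : a' ⟶ a)
    (g : b ⟶ b') : ehomObj d a b ⟶ ehomObj d a' b' :=
  Sigma.desc fun σ => Sigma.ι (fun _ : (a' ⟶ b') => d.s.unit) (f ≫ σ ≫ g)

/-- The coend `∫^b H(b,b)` of raw bifunctor data `H` (contravariant in the first
variable), as a coequalizer of coproducts. -/
noncomputable def coendObj (Hobj : M → M → V)
    (Hmap : ∀ {x x' y y' : M}, (x' ⟶ x) → (y ⟶ y') → (Hobj x y ⟶ Hobj x' y')) : V :=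
  coequalizer
    (Sigma.desc fun p : (Σ x y : M, x ⟶ y) =>
      (Hmap p.2.2 (𝟙 p.1) ≫ Sigma.ι (fun b : M => Hobj b b) p.1 :
        Hobj p.2.1 p.1 ⟶ ∐ fun b : M => Hobj b b))
    (Sigma.desc fun p : (Σ x y : M, x ⟶ y) =>
      Hmap (𝟙 p.2.1) p.2.2 ≫ Sigma.ι (fun b : M => Hobj b b) p.2.1)

/-- The coprojection into the coend. -/
noncomputable def coendPr (Hobj : M → M → V)
    (Hmap : ∀ {x x' y y' : M}, (x' ⟶ x) → (y ⟶ y') → (Hobj x y ⟶ Hobj x' y'))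
    (b : M) : Hobj b b ⟶ coendObj Hobj Hmap :=
  Sigma.ι (fun b : M => Hobj b b) b ≫ coequalizer.π _ _

/-- The object part of the composition product
`(S ∘̂ T)(a,c) = ∫^b T(a,b) ∘ S(b,c)`. -/
noncomputable def compObj (d : DuoidalData V) (S T : LaxMonData d.p M) (a c : M) : V :=
  coendObj (fun x y => d.s.t (T.obj a y) (S.obj x c))
    (fun f g => d.s.tHom (T.map (𝟙 a) g) (S.map f (𝟙 c)))

/-- The coprojection `T(a,b) ∘ S(b,c) ⟶ (S ∘̂ T)(a,c)`. -/
noncomputable def compPr (d : DuoidalData V) (S T : LaxMonData d.p M) (a c b : M) :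
    d.s.t (T.obj a b) (S.obj b c) ⟶ compObj d S T a c :=
  coendPr (fun x y => d.s.t (T.obj a y) (S.obj x c))
    (fun f g => d.s.tHom (T.map (𝟙 a) g) (S.map f (𝟙 c))) b

end Cocomplete

attribute [reducible] ehomObj tLeft tRight

open CategoryTheory.Limits

section Aux

variable {V : Type u₁} [Category.{v₁} V] [HasColimits V]

lemma jointlyEpi {ιT : Type v₁} (F : V ⥤ V) (hF : PreservesColimits F)
    (f : ιT → V) {W : V} {u v : F.obj (∐ f) ⟶ W}
    (h : ∀ i, F.map (Sigma.ι f i) ≫ u = F.map (Sigma.ι f i) ≫ v) : u = v := by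
  haveI := hF
  haveI : IsIso (sigmaComparison F f) := inferInstance
  rw [← cancel_epi (sigmaComparison F f)]
  apply Sigma.hom_ext
  intro i
  simp only [ι_comp_sigmaComparison_assoc, h i]

lemma mapι_inv_comparison {ιT : Type v₁} (F : V ⥤ V) (hF : PreservesColimits F)
    (f : ιT → V) (i : ιT) :
    F.map (Sigma.ι f i) ≫ inv (sigmaComparison F f) = Sigma.ι (fun j => F.obj (f j)) i := by
  haveI := hF
  haveI : IsIso (sigmaComparison F f) := inferInstance
  rw [IsIso.comp_inv_eq, ι_comp_sigmaComparison]

lemma mapι_inv_desc {ιT : Type v₁} (F : V ⥤ V) (hF : PreservesColimits F)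
    (f : ιT → V) (i : ιT) {W : V} (g : ∀ j, F.obj (f j) ⟶ W) :
    F.map (Sigma.ι f i) ≫ inv (sigmaComparison F f) ≫ Sigma.desc g = g i := by
  rw [← Category.assoc, mapι_inv_comparison F hF f i, Sigma.ι_desc]

lemma tHom_split (m : MonStrData V) (hm : IsMonStr m) {A A' B B' : V}
    (f : A ⟶ A') (g : B ⟶ B') :
    m.tHom (𝟙 A) g ≫ m.tHom f (𝟙 B') = m.tHom f g := by
  rw [← hm.tHom_comp, Category.id_comp, Category.comp_id]

lemma tHom_split' (m : MonStrData V) (hm : IsMonStr m) {A A' B B' : V}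
    (f : A ⟶ A') (g : B ⟶ B') :
    m.tHom f (𝟙 B) ≫ m.tHom (𝟙 A') g = m.tHom f g := by
  rw [← hm.tHom_comp, Category.id_comp, Category.comp_id]

lemma ext2 (m : MonStrData V) (hm : IsMonStr m)
    (hpL : ∀ X : V, PreservesColimits (tLeft m hm X))
    (hpR : ∀ X : V, PreservesColimits (tRight m hm X))
    {ι₁ ι₂ : Type v₁} (f₁ : ι₁ → V) (f₂ : ι₂ → V) {W : V}
    {u v : m.t (∐ f₁) (∐ f₂) ⟶ W}
    (h : ∀ i j, m.tHom (Sigma.ι f₁ i) (Sigma.ι f₂ j) ≫ u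
      = m.tHom (Sigma.ι f₁ i) (Sigma.ι f₂ j) ≫ v) : u = v := by
  refine jointlyEpi (tRight m hm (∐ f₂)) (hpR _) f₁ ?_
  intro i
  refine jointlyEpi (tLeft m hm (f₁ i)) (hpL _) f₂ ?_
  intro j
  dsimp only [tLeft, tRight]
  simp only [← Category.assoc, tHom_split m hm]
  simp only [Category.assoc, h i j]

lemma ext3 (m : MonStrData V) (hm : IsMonStr m)
    (hpL : ∀ X : V, PreservesColimits (tLeft m hm X))
    (hpR : ∀ X : V, PreservesColimits (tRight m hm X))
    {ι₁ ι₂ ι₃ : Type v₁} (f₁ : ι₁ → V) (f₂ : ι₂ → V) (f₃ : ι₃ → V) {W : V}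
    {u v : m.t (m.t (∐ f₁) (∐ f₂)) (∐ f₃) ⟶ W}
    (h : ∀ i j k, m.tHom (m.tHom (Sigma.ι f₁ i) (Sigma.ι f₂ j)) (Sigma.ι f₃ k) ≫ u
      = m.tHom (m.tHom (Sigma.ι f₁ i) (Sigma.ι f₂ j)) (Sigma.ι f₃ k) ≫ v) : u = v := by
  refine jointlyEpi (tLeft m hm (m.t (∐ f₁) (∐ f₂))) (hpL _) f₃ ?_
  intro k
  haveI := hpR (∐ f₂)
  haveI := hpR (f₃ k)
  refine jointlyEpi (tRight m hm (∐ f₂) ⋙ tRight m hm (f₃ k)) inferInstance f₁ ?_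
  intro i
  haveI := hpL (f₁ i)
  refine jointlyEpi (tLeft m hm (f₁ i) ⋙ tRight m hm (f₃ k)) inferInstance f₂ ?_
  intro j
  dsimp only [tLeft, tRight, Functor.comp_obj, Functor.comp_map]
  have e1 : m.tHom (m.tHom (𝟙 (f₁ i)) (Sigma.ι f₂ j)) (𝟙 (f₃ k))
      ≫ m.tHom (m.tHom (Sigma.ι f₁ i) (𝟙 (∐ f₂))) (𝟙 (f₃ k))
      = m.tHom (m.tHom (Sigma.ι f₁ i) (Sigma.ι f₂ j)) (𝟙 (f₃ k)) := by
    rw [← hm.tHom_comp, tHom_split m hm, Category.comp_id]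
  have e2 : m.tHom (m.tHom (Sigma.ι f₁ i) (Sigma.ι f₂ j)) (𝟙 (f₃ k))
      ≫ m.tHom (𝟙 (m.t (∐ f₁) (∐ f₂))) (Sigma.ι f₃ k)
      = m.tHom (m.tHom (Sigma.ι f₁ i) (Sigma.ι f₂ j)) (Sigma.ι f₃ k) :=
    tHom_split' m hm _ _
  simp only [← Category.assoc]
  rw [e1, e2]
  simp only [Category.assoc, h i j k]

variable {M : Type v₁} [Category.{v₁} M] [MonoidalCategory M]

lemma ehomMap_ι (d : DuoidalData V) {a a' b b' : M} (f : a' ⟶ a) (g : b ⟶ b') (σ : a ⟶ b) :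
    Sigma.ι (fun _ : (a ⟶ b) => d.s.unit) σ ≫ ehomMap d f g
      = Sigma.ι (fun _ : (a' ⟶ b') => d.s.unit) (f ≫ σ ≫ g) := by
  simp [ehomMap]

/-- The multiplication of the lax monoidal structure on `hom̲_M`. -/
noncomputable def ehomMul (d : DuoidalData V) (hp : IsMonStr d.p)
    (hp₁ : ∀ X : V, PreservesColimits (tLeft d.p hp X))
    (hp₂ : ∀ X : V, PreservesColimits (tRight d.p hp X))
    (a₁ b₁ a₂ b₂ : M) :
    d.p.t (ehomObj d a₁ b₁) (ehomObj d a₂ b₂) ⟶ ehomObj d (a₁ ⊗ a₂) (b₁ ⊗ b₂) :=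
  by
  haveI := hp₂ (ehomObj d a₂ b₂)
  haveI := hp₁ d.s.unit
  haveI h₁ : IsIso (sigmaComparison (tRight d.p hp (ehomObj d a₂ b₂)) (fun _ : (a₁ ⟶ b₁) => d.s.unit)) := inferInstance
  haveI h₂ : IsIso (sigmaComparison (tLeft d.p hp d.s.unit) (fun _ : (a₂ ⟶ b₂) => d.s.unit)) := inferInstance
  exact inv (sigmaComparison (tRight d.p hp (ehomObj d a₂ b₂)) (fun _ : (a₁ ⟶ b₁) => d.s.unit)) (I := h₁) ≫
    Sigma.desc (fun σ₁ : a₁ ⟶ b₁ =>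
      inv (sigmaComparison (tLeft d.p hp d.s.unit) (fun _ : (a₂ ⟶ b₂) => d.s.unit)) (I := h₂) ≫
        Sigma.desc (fun σ₂ : a₂ ⟶ b₂ =>
          d.nabla ≫ Sigma.ι (fun _ : (a₁ ⊗ a₂ ⟶ b₁ ⊗ b₂) => d.s.unit) (σ₁ ⊗ₘ σ₂)))

lemma ehomMul_comm (d : DuoidalData V) (hp : IsMonStr d.p)
    (hp₁ : ∀ X : V, PreservesColimits (tLeft d.p hp X))
    (hp₂ : ∀ X : V, PreservesColimits (tRight d.p hp X))
    {a₁ b₁ a₂ b₂ : M} (σ₁ : a₁ ⟶ b₁) (σ₂ : a₂ ⟶ b₂) :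
    d.p.tHom (Sigma.ι (fun _ : (a₁ ⟶ b₁) => d.s.unit) σ₁)
        (Sigma.ι (fun _ : (a₂ ⟶ b₂) => d.s.unit) σ₂) ≫ ehomMul d hp hp₁ hp₂ a₁ b₁ a₂ b₂
      = d.nabla ≫ Sigma.ι (fun _ : (a₁ ⊗ a₂ ⟶ b₁ ⊗ b₂) => d.s.unit) (σ₁ ⊗ₘ σ₂) := by
  have h1 : d.p.tHom (Sigma.ι (fun _ : (a₁ ⟶ b₁) => d.s.unit) σ₁)
        (Sigma.ι (fun _ : (a₂ ⟶ b₂) => d.s.unit) σ₂)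
      = (tLeft d.p hp d.s.unit).map (Sigma.ι (fun _ : (a₂ ⟶ b₂) => d.s.unit) σ₂)
        ≫ (tRight d.p hp (ehomObj d a₂ b₂)).map
            (Sigma.ι (fun _ : (a₁ ⟶ b₁) => d.s.unit) σ₁) := by
    dsimp only [tLeft, tRight]
    exact (tHom_split d.p hp _ _).symm
  rw [ehomMul, h1, Category.assoc,
    mapι_inv_desc (tRight d.p hp (ehomObj d a₂ b₂)) (hp₂ _) _ σ₁,
    mapι_inv_desc (tLeft d.p hp d.s.unit) (hp₁ _) _ σ₂]

lemma ehomMul_comm_assoc (d : DuoidalData V) (hp : IsMonStr d.p)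
    (hp₁ : ∀ X : V, PreservesColimits (tLeft d.p hp X))
    (hp₂ : ∀ X : V, PreservesColimits (tRight d.p hp X))
    {a₁ b₁ a₂ b₂ : M} (σ₁ : a₁ ⟶ b₁) (σ₂ : a₂ ⟶ b₂) {W : V}
    (g : ehomObj d (a₁ ⊗ a₂) (b₁ ⊗ b₂) ⟶ W) :
    d.p.tHom (Sigma.ι (fun _ : (a₁ ⟶ b₁) => d.s.unit) σ₁)
        (Sigma.ι (fun _ : (a₂ ⟶ b₂) => d.s.unit) σ₂) ≫ ehomMul d hp hp₁ hp₂ a₁ b₁ a₂ b₂ ≫ g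
      = d.nabla ≫ Sigma.ι (fun _ : (a₁ ⊗ a₂ ⟶ b₁ ⊗ b₂) => d.s.unit) (σ₁ ⊗ₘ σ₂) ≫ g := by
  rw [← Category.assoc, ehomMul_comm d hp hp₁ hp₂ σ₁ σ₂, Category.assoc]

end Aux

set_option maxHeartbeats 2000000 in
/-- Let `V` be a cocomplete duoidal category and `M` a small monoidal category.
Then `hom̲_M(a,b) = ∐_{σ ∈ M(a,b)} I` is a lax monoidal functor `M^op × M → (V, ∗, J)`,
with unit coherence `ε` followed by the coprojection at `id`, and multiplication
given (under cocontinuity) componentwise by `∇` and the coprojections at `σ₁ ⊕ σ₂`. -/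
theorem ehom_lax_monoidal {V : Type u₁} [Category.{v₁} V] [HasColimits V]
    {M : Type v₁} [Category.{v₁} M] [MonoidalCategory M]
    (d : DuoidalData V) (hd : IsDuoidal d)
    (hp₁ : ∀ X : V, PreservesColimits (tLeft d.p hd.p_mon X))
    (hp₂ : ∀ X : V, PreservesColimits (tRight d.p hd.p_mon X))
    (hs₁ : ∀ X : V, PreservesColimits (tLeft d.s hd.s_mon X))
    (hs₂ : ∀ X : V, PreservesColimits (tRight d.s hd.s_mon X)) :
    ∃ (η : d.p.unit ⟶ ehomObj d (𝟙_ M) (𝟙_ M))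
      (μ : ∀ a₁ b₁ a₂ b₂ : M,
        d.p.t (ehomObj d a₁ b₁) (ehomObj d a₂ b₂) ⟶ ehomObj d (a₁ ⊗ a₂) (b₁ ⊗ b₂)),
      IsLaxMon ⟨ehomObj d, fun {a a' b b'} f g => ehomMap d f g, η, μ⟩ ∧
      η = d.eps ≫ Sigma.ι (fun _ : (𝟙_ M ⟶ 𝟙_ M) => d.s.unit) (𝟙 (𝟙_ M)) ∧
      ∀ (a₁ b₁ a₂ b₂ : M) (σ₁ : a₁ ⟶ b₁) (σ₂ : a₂ ⟶ b₂),
        d.p.tHom (Sigma.ι (fun _ : (a₁ ⟶ b₁) => d.s.unit) σ₁)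
            (Sigma.ι (fun _ : (a₂ ⟶ b₂) => d.s.unit) σ₂) ≫ μ a₁ b₁ a₂ b₂
          = d.nabla ≫ Sigma.ι (fun _ : (a₁ ⊗ a₂ ⟶ b₁ ⊗ b₂) => d.s.unit) (σ₁ ⊗ₘ σ₂) := by
  refine ⟨d.eps ≫ Sigma.ι (fun _ : (𝟙_ M ⟶ 𝟙_ M) => d.s.unit) (𝟙 (𝟙_ M)),
    ehomMul d hd.p_mon hp₁ hp₂, ?_, rfl,
    fun a₁ b₁ a₂ b₂ σ₁ σ₂ => ehomMul_comm d hd.p_mon hp₁ hp₂ σ₁ σ₂⟩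
  constructor
  · -- map_id
    intro a b
    apply Sigma.hom_ext
    intro σ
    dsimp only [ehomObj]
    simp [ehomMap_ι]
  · -- map_comp
    intro a a' a'' b b' b'' f f' g g'
    apply Sigma.hom_ext
    intro σ
    dsimp only [ehomObj]
    simp only [ehomMap, Sigma.ι_desc]
    congr 1
    simp
  · -- μ_nat
    intro a₁ a₁' b₁ b₁' a₂ a₂' b₂ b₂' f₁ g₁ f₂ g₂
    apply ext2 d.p hd.p_mon hp₁ hp₂ (fun _ : (a₁ ⟶ b₁) => d.s.unit)
      (fun _ : (a₂ ⟶ b₂) => d.s.unit)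
    intro σ₁ σ₂
    dsimp only [ehomObj]
    rw [← Category.assoc, ← hd.p_mon.tHom_comp, ehomMap_ι, ehomMap_ι, ehomMul_comm d hd.p_mon hp₁ hp₂ _ _, ehomMul_comm_assoc d hd.p_mon hp₁ hp₂ _ _,
      ehomMap_ι]
    have : (f₁ ≫ σ₁ ≫ g₁) ⊗ₘ (f₂ ≫ σ₂ ≫ g₂) = (f₁ ⊗ₘ f₂) ≫ (σ₁ ⊗ₘ σ₂) ≫ (g₁ ⊗ₘ g₂) := by
      simp [MonoidalCategory.tensorHom_comp_tensorHom]
    rw [this]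
  · -- assoc
    intro a₁ b₁ a₂ b₂ a₃ b₃
    apply ext3 d.p hd.p_mon hp₁ hp₂ (fun _ : (a₁ ⟶ b₁) => d.s.unit)
      (fun _ : (a₂ ⟶ b₂) => d.s.unit) (fun _ : (a₃ ⟶ b₃) => d.s.unit)
    intro σ₁ σ₂ σ₃
    dsimp only [ehomObj]
    have lhs : d.p.tHom (d.p.tHom (Sigma.ι (fun _ : (a₁ ⟶ b₁) => d.s.unit) σ₁)
          (Sigma.ι (fun _ : (a₂ ⟶ b₂) => d.s.unit) σ₂))
          (Sigma.ι (fun _ : (a₃ ⟶ b₃) => d.s.unit) σ₃)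
        ≫ d.p.tHom (ehomMul d hd.p_mon hp₁ hp₂ a₁ b₁ a₂ b₂) (𝟙 (∐ (fun _ : (a₃ ⟶ b₃) => d.s.unit)))
        ≫ ehomMul d hd.p_mon hp₁ hp₂ (a₁ ⊗ a₂) (b₁ ⊗ b₂) a₃ b₃
        ≫ ehomMap d (α_ a₁ a₂ a₃).inv (α_ b₁ b₂ b₃).hom
        = (d.p.tHom d.nabla (𝟙 d.s.unit) ≫ d.nabla)
          ≫ Sigma.ι (fun _ : (a₁ ⊗ (a₂ ⊗ a₃) ⟶ b₁ ⊗ (b₂ ⊗ b₃)) => d.s.unit)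
              (σ₁ ⊗ₘ σ₂ ⊗ₘ σ₃) := by
      rw [← Category.assoc, ← hd.p_mon.tHom_comp, ehomMul_comm d hd.p_mon hp₁ hp₂ _ _, Category.comp_id]
      have : d.p.tHom (d.nabla ≫ Sigma.ι (fun _ : (a₁ ⊗ a₂ ⟶ b₁ ⊗ b₂) => d.s.unit) (σ₁ ⊗ₘ σ₂))
            (Sigma.ι (fun _ : (a₃ ⟶ b₃) => d.s.unit) σ₃)
          = d.p.tHom d.nabla (𝟙 d.s.unit)
            ≫ d.p.tHom (Sigma.ι (fun _ : (a₁ ⊗ a₂ ⟶ b₁ ⊗ b₂) => d.s.unit) (σ₁ ⊗ₘ σ₂))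
                (Sigma.ι (fun _ : (a₃ ⟶ b₃) => d.s.unit) σ₃) := by
        rw [← hd.p_mon.tHom_comp, Category.id_comp]
      rw [this, Category.assoc, ehomMul_comm_assoc d hd.p_mon hp₁ hp₂ _ _, ehomMap_ι]
      have : (α_ a₁ a₂ a₃).inv ≫ ((σ₁ ⊗ₘ σ₂) ⊗ₘ σ₃) ≫ (α_ b₁ b₂ b₃).hom = σ₁ ⊗ₘ σ₂ ⊗ₘ σ₃ := by
        rw [MonoidalCategory.associator_naturality, Iso.inv_hom_id_assoc]
      rw [this, Category.assoc]
    have rhs : d.p.tHom (d.p.tHom (Sigma.ι (fun _ : (a₁ ⟶ b₁) => d.s.unit) σ₁)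
          (Sigma.ι (fun _ : (a₂ ⟶ b₂) => d.s.unit) σ₂))
          (Sigma.ι (fun _ : (a₃ ⟶ b₃) => d.s.unit) σ₃)
        ≫ d.p.aHom (∐ (fun _ : (a₁ ⟶ b₁) => d.s.unit)) (∐ (fun _ : (a₂ ⟶ b₂) => d.s.unit)) (∐ (fun _ : (a₃ ⟶ b₃) => d.s.unit))
        ≫ d.p.tHom (𝟙 (∐ (fun _ : (a₁ ⟶ b₁) => d.s.unit))) (ehomMul d hd.p_mon hp₁ hp₂ a₂ b₂ a₃ b₃)
        ≫ ehomMul d hd.p_mon hp₁ hp₂ a₁ b₁ (a₂ ⊗ a₃) (b₂ ⊗ b₃)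
        = (d.p.aHom d.s.unit d.s.unit d.s.unit ≫ d.p.tHom (𝟙 d.s.unit) d.nabla ≫ d.nabla)
          ≫ Sigma.ι (fun _ : (a₁ ⊗ (a₂ ⊗ a₃) ⟶ b₁ ⊗ (b₂ ⊗ b₃)) => d.s.unit)
              (σ₁ ⊗ₘ σ₂ ⊗ₘ σ₃) := by
      rw [← Category.assoc, hd.p_mon.a_nat, Category.assoc, ← Category.assoc
        (d.p.tHom _ _), ← hd.p_mon.tHom_comp, Category.comp_id, ehomMul_comm d hd.p_mon hp₁ hp₂ _ _]
      have : d.p.tHom (Sigma.ι (fun _ : (a₁ ⟶ b₁) => d.s.unit) σ₁)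
            (d.nabla ≫ Sigma.ι (fun _ : (a₂ ⊗ a₃ ⟶ b₂ ⊗ b₃) => d.s.unit) (σ₂ ⊗ₘ σ₃))
          = d.p.tHom (𝟙 d.s.unit) d.nabla
            ≫ d.p.tHom (Sigma.ι (fun _ : (a₁ ⟶ b₁) => d.s.unit) σ₁)
                (Sigma.ι (fun _ : (a₂ ⊗ a₃ ⟶ b₂ ⊗ b₃) => d.s.unit) (σ₂ ⊗ₘ σ₃)) := by
        rw [← hd.p_mon.tHom_comp, Category.id_comp]
      rw [this, Category.assoc, ehomMul_comm d hd.p_mon hp₁ hp₂ _ _]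
      simp only [Category.assoc]
    rw [lhs, rhs, hd.nabla_assoc]
  · -- left_unit
    intro a b
    refine jointlyEpi (tLeft d.p hd.p_mon d.p.unit) (hp₁ _)
      (fun _ : (a ⟶ b) => d.s.unit) ?_
    intro σ
    dsimp only [ehomObj, tLeft]
    rw [← Category.assoc, tHom_split d.p hd.p_mon]
    have : d.p.tHom (d.eps ≫ Sigma.ι (fun _ : (𝟙_ M ⟶ 𝟙_ M) => d.s.unit) (𝟙 (𝟙_ M)))
          (Sigma.ι (fun _ : (a ⟶ b) => d.s.unit) σ)
        = d.p.tHom d.eps (𝟙 d.s.unit)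
          ≫ d.p.tHom (Sigma.ι (fun _ : (𝟙_ M ⟶ 𝟙_ M) => d.s.unit) (𝟙 (𝟙_ M)))
              (Sigma.ι (fun _ : (a ⟶ b) => d.s.unit) σ) := by
      rw [← hd.p_mon.tHom_comp, Category.id_comp]
    rw [this, Category.assoc, ehomMul_comm_assoc d hd.p_mon hp₁ hp₂ _ _, ehomMap_ι, ← Category.assoc, hd.nabla_eps_left,
      hd.p_mon.l_nat]
    have : (λ_ a).inv ≫ (𝟙 (𝟙_ M) ⊗ₘ σ) ≫ (λ_ b).hom = σ := by
      simp
    rw [this]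
  · -- right_unit
    intro a b
    refine jointlyEpi (tRight d.p hd.p_mon d.p.unit) (hp₂ _)
      (fun _ : (a ⟶ b) => d.s.unit) ?_
    intro σ
    dsimp only [ehomObj, tRight]
    rw [← Category.assoc, tHom_split' d.p hd.p_mon]
    have : d.p.tHom (Sigma.ι (fun _ : (a ⟶ b) => d.s.unit) σ)
          (d.eps ≫ Sigma.ι (fun _ : (𝟙_ M ⟶ 𝟙_ M) => d.s.unit) (𝟙 (𝟙_ M)))
        = d.p.tHom (𝟙 d.s.unit) d.eps
          ≫ d.p.tHom (Sigma.ι (fun _ : (a ⟶ b) => d.s.unit) σ)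
              (Sigma.ι (fun _ : (𝟙_ M ⟶ 𝟙_ M) => d.s.unit) (𝟙 (𝟙_ M))) := by
      rw [← hd.p_mon.tHom_comp, Category.id_comp]
    rw [this, Category.assoc, ehomMul_comm_assoc d hd.p_mon hp₁ hp₂ _ _, ehomMap_ι, ← Category.assoc, hd.nabla_eps_right,
      hd.p_mon.r_nat]
    have : (ρ_ a).inv ≫ (σ ⊗ₘ 𝟙 (𝟙_ M)) ≫ (ρ_ b).hom = σ := by
      simp
    rw [this]
end
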